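/- Under the billiard polygon setup with h the support function of an ellipse with a₁ ≠ a₂ and under the Joachimsthal hypothesis, one has Σ_{i=1}^{n} sin 2ψᵢ = 0. -/

import Mathlib

/-!
With `u θ = (cos θ, sin θ)`, the point `M(ψ) = h(ψ) u(ψ) + h'(ψ) u'(ψ)` satisfies
`⟨M(ψ), u(ψ + ε)⟩ = h(ψ) cos ε + h'(ψ) sin ε`, and for the ellipse `h h' = -((a₁² - a₂²)/2) sin 2ψ`.
Using `sin δᵢ = J h(ψᵢ)` and `φᵢ₋₁ = ψᵢ - δᵢ`, `φᵢ = ψᵢ + δᵢ`, this gives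
`⟨Mᵢ, u(φᵢ₋₁)⟩ = gᵢ + c sin 2ψᵢ` and `⟨Mᵢ, u(φᵢ)⟩ = gᵢ - c sin 2ψᵢ` with `gᵢ = h(ψᵢ) cos δᵢ`,
`c = J (a₁² - a₂²)/2 ≠ 0`.
The chord `Mᵢ₊₁ - Mᵢ` is orthogonal to `u(φᵢ)`, so `⟨Mᵢ, u(φᵢ)⟩ = ⟨Mᵢ₊₁, u(φᵢ)⟩`; summing around
the closed polygon, the two sums coincide, whence `2c ∑ sin 2ψᵢ = 0`.
-/

open Real Finset

theorem Finset.sum_Icc_one_shift_eq_of_cyclic {M : Type*} [AddCommMonoid M] {n : ℕ} (f : ℕ → M)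
    (hf : f (n + 1) = f 1) : ∑ i ∈ Icc 1 n, f (i + 1) = ∑ i ∈ Icc 1 n, f i := by
  rcases n with _ | m
  · simp
  · rw [← Ico_add_one_right_eq_Icc, sum_Ico_eq_sum_range, sum_Ico_eq_sum_range,
      Nat.add_sub_cancel, sum_range_succ, sum_range_succ']
    simp only [add_assoc, add_comm 1] at hf ⊢
    rw [hf]

namespace Billiard

noncomputable def unitVec (θ : ℝ) : EuclideanSpace ℝ (Fin 2) := WithLp.toLp 2 ![cos θ, sin θ]

noncomputable def unitNormal (θ : ℝ) : EuclideanSpace ℝ (Fin 2) :=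
  WithLp.toLp 2 ![-sin θ, cos θ]

theorem inner_unitVec_unitVec (α β : ℝ) : inner ℝ (unitVec α) (unitVec β) = cos (β - α) := by
  simp [unitVec, PiLp.inner_apply, Fin.sum_univ_two, cos_sub]

theorem inner_unitNormal_unitVec (α β : ℝ) :
    inner ℝ (unitNormal α) (unitVec β) = sin (β - α) := by
  simp only [unitNormal, unitVec, PiLp.inner_apply, RCLike.inner_apply, ringHom_apply,
    Fin.sum_univ_two, Fin.isValue, Matrix.cons_val_zero, Matrix.cons_val_one,
    Matrix.cons_val_fin_one, sin_sub]
  ring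

theorem unitVec_add_two_pi (θ : ℝ) : unitVec (θ + 2 * π) = unitVec θ := by
  simp [unitVec]

theorem inner_smul_unitVec_add_smul_unitNormal (p q α ε : ℝ) :
    inner ℝ (p • unitVec α + q • unitNormal α) (unitVec (α + ε)) = p * cos ε + q * sin ε := by
  simp only [inner_add_left, inner_smul_left, inner_unitVec_unitVec, inner_unitNormal_unitVec,
    add_sub_cancel_left, conj_trivial]

theorem inner_unitVec_eq_of_sub_eq_smul_unitNormal {P Q : EuclideanSpace ℝ (Fin 2)} {t φ : ℝ}
    (h : Q - P = t • unitNormal φ) : inner ℝ Q (unitVec φ) = inner ℝ P (unitVec φ) := by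
  have hperp : inner ℝ (Q - P) (unitVec φ) = 0 := by
    rw [h, inner_smul_left, inner_unitNormal_unitVec, sub_self, sin_zero, mul_zero]
  rwa [inner_sub_left, sub_eq_zero] at hperp

noncomputable def ellipseSupport (a₁ a₂ x : ℝ) : ℝ := √(a₁ ^ 2 * cos x ^ 2 + a₂ ^ 2 * sin x ^ 2)

section Ellipse

variable {a₁ a₂ : ℝ}

theorem ellipseSupport_radicand_pos (ha₁ : a₁ ≠ 0) (ha₂ : a₂ ≠ 0) (x : ℝ) :
    0 < a₁ ^ 2 * cos x ^ 2 + a₂ ^ 2 * sin x ^ 2 := by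
  rcases eq_or_ne (cos x) 0 with hc | hc
  · have hs : sin x ^ 2 = 1 := by nlinarith [sin_sq_add_cos_sq x]
    rw [hc, hs]
    positivity
  · positivity

theorem ellipseSupport_pos (ha₁ : a₁ ≠ 0) (ha₂ : a₂ ≠ 0) (x : ℝ) : 0 < ellipseSupport a₁ a₂ x :=
  sqrt_pos.mpr (ellipseSupport_radicand_pos ha₁ ha₂ x)

theorem hasDerivAt_ellipseSupport (ha₁ : a₁ ≠ 0) (ha₂ : a₂ ≠ 0) (x : ℝ) :
    HasDerivAt (ellipseSupport a₁ a₂)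
      (-((a₁ ^ 2 - a₂ ^ 2) / 2 * sin (2 * x)) / ellipseSupport a₁ a₂ x) x := by
  have hq := (((hasDerivAt_cos x).pow 2).const_mul (a₁ ^ 2)).add
    (((hasDerivAt_sin x).pow 2).const_mul (a₂ ^ 2))
  convert hq.sqrt (ellipseSupport_radicand_pos ha₁ ha₂ x).ne' using 1
  · rfl
  · rw [ellipseSupport, sin_two_mul]
    simp only [Nat.cast_ofNat, Nat.add_one_sub_one, pow_one, mul_neg, Pi.pow_apply, Pi.add_apply]
    ring

theorem inner_ellipsePedal_unitVec_add {J ψ ε : ℝ} (ha₁ : a₁ ≠ 0) (ha₂ : a₂ ≠ 0)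
    (hε : sin ε = J * ellipseSupport a₁ a₂ ψ) :
    inner ℝ (ellipseSupport a₁ a₂ ψ • unitVec ψ + deriv (ellipseSupport a₁ a₂) ψ • unitNormal ψ)
        (unitVec (ψ + ε))
      = ellipseSupport a₁ a₂ ψ * cos ε - (a₁ ^ 2 - a₂ ^ 2) / 2 * J * sin (2 * ψ) := by
  rw [inner_smul_unitVec_add_smul_unitNormal, (hasDerivAt_ellipseSupport ha₁ ha₂ ψ).deriv, hε]
  field_simp [(ellipseSupport_pos ha₁ ha₂ ψ).ne']
  ring

end Ellipse

end Billiard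

open Billiard

theorem stmt_8_general
    (a₁ a₂ : ℝ) (ha₁ : 0 < a₁) (ha₂ : 0 < a₂)
    (h : ℝ → ℝ)
    (hh : ∀ x : ℝ, h x = Real.sqrt (a₁ ^ 2 * Real.cos x ^ 2 + a₂ ^ 2 * Real.sin x ^ 2))
    (n : ℕ)
    (φ ψ δ : ℕ → ℝ)
    (hφ : φ n = φ 0 + 2 * Real.pi)
    (hψ : ∀ i ∈ Finset.Icc 1 n, ψ i = (φ (i - 1) + φ i) / 2)
    (hδ : ∀ i ∈ Finset.Icc 1 n, δ i = (φ i - φ (i - 1)) / 2)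
    (M : ℕ → EuclideanSpace ℝ (Fin 2))
    (hM : ∀ i ∈ Finset.Icc 1 n, M i
        = h (ψ i) • (WithLp.toLp 2 ![Real.cos (ψ i), Real.sin (ψ i)] : EuclideanSpace ℝ (Fin 2))
        + deriv h (ψ i) • (WithLp.toLp 2 ![-Real.sin (ψ i), Real.cos (ψ i)] : EuclideanSpace ℝ (Fin 2)))
    (hMwrap : M (n + 1) = M 1)
    (chord : ∀ i ∈ Finset.Icc 1 n, ∃ t : ℝ, 0 < t ∧
        M (i + 1) - M i = t • (WithLp.toLp 2 ![-Real.sin (φ i), Real.cos (φ i)] : EuclideanSpace ℝ (Fin 2)))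
    (J : ℝ) (hJ : 0 < J)
    (hJoach : ∀ i ∈ Finset.Icc 1 n, Real.sin (δ i) = J * h (ψ i))
    (ha : a₁ ≠ a₂)
    : ∑ i ∈ Finset.Icc 1 n, Real.sin (2 * ψ i) = 0 := by
  obtain rfl : h = ellipseSupport a₁ a₂ := funext hh
  set h := ellipseSupport a₁ a₂
  set c := (a₁ ^ 2 - a₂ ^ 2) / 2 * J
  have hout : ∀ i ∈ Icc 1 n,
      inner ℝ (M i) (unitVec (φ i)) = h (ψ i) * cos (δ i) - c * sin (2 * ψ i) := fun i hi => by
    rw [show φ i = ψ i + δ i by rw [hψ i hi, hδ i hi]; ring, hM i hi]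
    exact inner_ellipsePedal_unitVec_add ha₁.ne' ha₂.ne' (hJoach i hi)
  have hin : ∀ i ∈ Icc 1 n,
      inner ℝ (M i) (unitVec (φ (i - 1))) = h (ψ i) * cos (δ i) + c * sin (2 * ψ i) := fun i hi => by
    rw [show φ (i - 1) = ψ i + -δ i by rw [hψ i hi, hδ i hi]; ring, hM i hi,
      ← cos_neg (δ i)]
    have hneg : sin (-δ i) = -J * h (ψ i) := by rw [sin_neg, hJoach i hi, neg_mul]
    exact (inner_ellipsePedal_unitVec_add ha₁.ne' ha₂.ne' hneg).trans (by ring)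
  have hreflect : ∀ i ∈ Icc 1 n,
      inner ℝ (M (i + 1)) (unitVec (φ i)) = inner ℝ (M i) (unitVec (φ i)) := fun i hi => by
    obtain ⟨t, -, ht⟩ := chord i hi
    exact inner_unitVec_eq_of_sub_eq_smul_unitNormal ht
  have hsum := sum_Icc_one_shift_eq_of_cyclic (n := n) (fun k => inner ℝ (M k) (unitVec (φ (k - 1))))
    (by simp only [Nat.add_sub_cancel, hMwrap, hφ, unitVec_add_two_pi, Nat.sub_self])
  simp only [Nat.add_sub_cancel] at hsum
  rw [sum_congr rfl fun i hi => (hreflect i hi).trans (hout i hi), sum_congr rfl hin,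
    sum_sub_distrib, sum_add_distrib, ← mul_sum] at hsum
  have hc : c ≠ 0 := by
    have : a₁ ^ 2 ≠ a₂ ^ 2 := fun h2 => ha ((sq_eq_sq₀ ha₁.le ha₂.le).mp h2)
    exact mul_ne_zero (div_ne_zero (sub_ne_zero.mpr this) two_ne_zero) hJ.ne'
  exact (mul_eq_zero.mp (by linarith : c * ∑ i ∈ Icc 1 n, sin (2 * ψ i) = 0)).resolve_left hc

/-- Corollary: `∑ sin 2ψᵢ = 0`. -/
theorem stmt_8
    (a₁ a₂ : ℝ) (ha₁ : 0 < a₁) (ha₂ : 0 < a₂)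
    (h : ℝ → ℝ)
    (hh : ∀ x : ℝ, h x = Real.sqrt (a₁ ^ 2 * Real.cos x ^ 2 + a₂ ^ 2 * Real.sin x ^ 2))
    (n : ℕ) (hn : 2 ≤ n)
    (φ ψ δ : ℕ → ℝ)
    (hφ : φ n = φ 0 + 2 * Real.pi)
    (hψ : ∀ i ∈ Finset.Icc 1 n, ψ i = (φ (i - 1) + φ i) / 2)
    (hδ : ∀ i ∈ Finset.Icc 1 n, δ i = (φ i - φ (i - 1)) / 2)
    (M : ℕ → EuclideanSpace ℝ (Fin 2))
    (hM : ∀ i ∈ Finset.Icc 1 n, M i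
        = h (ψ i) • (WithLp.toLp 2 ![Real.cos (ψ i), Real.sin (ψ i)] : EuclideanSpace ℝ (Fin 2))
        + deriv h (ψ i) • (WithLp.toLp 2 ![-Real.sin (ψ i), Real.cos (ψ i)] : EuclideanSpace ℝ (Fin 2)))
    (hMwrap : M (n + 1) = M 1)
    (chord : ∀ i ∈ Finset.Icc 1 n, ∃ t : ℝ, 0 < t ∧
        M (i + 1) - M i = t • (WithLp.toLp 2 ![-Real.sin (φ i), Real.cos (φ i)] : EuclideanSpace ℝ (Fin 2)))
    (J : ℝ) (hJ : 0 < J)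
    (hJoach : ∀ i ∈ Finset.Icc 1 n, Real.sin (δ i) = J * h (ψ i))
    (ha : a₁ ≠ a₂)
    : ∑ i ∈ Finset.Icc 1 n, Real.sin (2 * ψ i) = 0 :=
  stmt_8_general a₁ a₂ ha₁ ha₂ h hh n φ ψ δ hφ hψ hδ M hM hMwrap chord J hJ hJoach ha
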